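/- arXiv:1209.5095 — 4 statements merged into one kernel-verified Lean document; each statement's English description precedes it below -/
import Mathlib

section
/- Let Q be a closed cube in ℝⁿ and let Q₁ be an open neighbourhood of Q. Let σ : Q₁ → ℝ be twice differentiable with all second partial derivatives uniformly bounded on Q₁, and suppose |σ(x)| < 1 for all x ∈ Q. Then there exists a constant C₁ > 0, independent of a, such that for every a with 0 < a < 1/2 one has ∫_Q ‖∇σ(x)‖ · 𝟙{|σ(x)| < a} dx < C₁ · √a (the integral taken with respect to Lebesgue measure on Q). -/
/-!
The field `V = a · arctan (σ / a) · ∇σ` satisfies `|V| ≤ (π / 2) a ‖∇σ‖` and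
`div V = a · arctan (σ / a) · Δσ + ‖∇σ‖² / (1 + (σ / a)²)`, so the divergence theorem on the
cube bounds the weighted energy `∫_Q ‖∇σ‖² / (1 + (σ / a)²)` by a constant times `a`. On
`{|σ| < a}` the weight is at least `1 / 2`, and `‖∇σ‖ ≤ ‖∇σ‖² / (2 √a) + √a / 2` converts this
energy bound into the bound `C √a` for `∫_Q ‖∇σ‖ 𝟙{|σ| < a}`.
-/

open MeasureTheory Set Real

lemma abs_mul_arctan_div_le {a : ℝ} (ha : 0 ≤ a) (s : ℝ) : |a * arctan (s / a)| ≤ π / 2 * a := by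
  rw [abs_mul, abs_of_nonneg ha, mul_comm]
  exact mul_le_mul_of_nonneg_right
    (abs_le.2 ⟨(neg_pi_div_two_lt_arctan _).le, (arctan_lt_pi_div_two _).le⟩) ha

lemma hasDerivAt_mul_arctan_div {a : ℝ} (ha : a ≠ 0) (s : ℝ) :
    HasDerivAt (fun s => a * arctan (s / a)) (1 + (s / a) ^ 2)⁻¹ s := by
  refine ((((hasDerivAt_id' s).div_const a).arctan).const_mul a).congr_deriv ?_
  field_simp

lemma norm_gradient_eq_norm_fderiv {F : Type*} [NormedAddCommGroup F] [InnerProductSpace ℝ F]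
    [CompleteSpace F] (f : F → ℝ) (x : F) : ‖gradient f x‖ = ‖fderiv ℝ f x‖ :=
  (InnerProductSpace.toDual ℝ F).symm.norm_map _

section EuclideanCoordinates

variable {ι : Type*} [Fintype ι] [DecidableEq ι]

lemma norm_sq_eq_sum_sq_apply_single (L : StrongDual ℝ (EuclideanSpace ℝ ι)) :
    ‖L‖ ^ 2 = ∑ i, L (EuclideanSpace.single i 1) ^ 2 := by
  rw [← (InnerProductSpace.toDual ℝ _).symm.norm_map L, EuclideanSpace.norm_eq,
    sq_sqrt (by positivity)]
  congr! 1 with i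
  rw [Real.norm_eq_abs, sq_abs, ← InnerProductSpace.toDual_symm_apply,
    EuclideanSpace.inner_single_right, one_mul, conj_trivial]

lemma abs_apply_single_le (L : StrongDual ℝ (EuclideanSpace ℝ ι)) (i : ι) :
    |L (EuclideanSpace.single i 1)| ≤ ‖L‖ :=
  L.unit_le_opNorm _ (by simp)

lemma abs_sum_apply_single_single_le
    (B : EuclideanSpace ℝ ι →L[ℝ] StrongDual ℝ (EuclideanSpace ℝ ι)) :
    |∑ i, B (EuclideanSpace.single i 1) (EuclideanSpace.single i 1)| ≤
      Fintype.card ι * ‖B‖ := by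
  refine (Finset.abs_sum_le_sum_abs _ _).trans ?_
  rw [← nsmul_eq_mul, ← Finset.card_univ, ← Finset.sum_const]
  exact Finset.sum_le_sum fun i _ =>
    (abs_apply_single_le _ i).trans (B.unit_le_opNorm _ (by simp))

end EuclideanCoordinates

lemma integrableOn_sq_norm_fderiv_div {E : Type*} [NormedAddCommGroup E] [NormedSpace ℝ E]
    [MeasurableSpace E] [OpensMeasurableSpace E] {μ : Measure E} [IsFiniteMeasureOnCompacts μ]
    {K : Set E} (hK : IsCompact K) {σ : E → ℝ} (hσ : ∀ x ∈ K, DifferentiableAt ℝ σ x)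
    (hσ' : ∀ x ∈ K, DifferentiableAt ℝ (fderiv ℝ σ) x) (a : ℝ) :
    IntegrableOn (fun x => ‖fderiv ℝ σ x‖ ^ 2 / (1 + (σ x / a) ^ 2)) K μ :=
  ContinuousOn.integrableOn_compact hK fun x hx => ContinuousAt.continuousWithinAt <|
    ((hσ' x hx).continuousAt.norm.pow 2).div
      (continuousAt_const.add (((hσ x hx).continuousAt.div_const a).pow 2)) (by positivity)

abbrev euclideanBox {ι : Type*} (lo hi : ι → ℝ) : Set (EuclideanSpace ℝ ι) :=
  WithLp.ofLp ⁻¹' Icc lo hi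

lemma isCompact_euclideanBox {ι : Type*} [Fintype ι] (lo hi : ι → ℝ) :
    IsCompact (euclideanBox lo hi) :=
  (EuclideanSpace.equiv ι ℝ).toHomeomorph.isCompact_preimage.2 isCompact_Icc

lemma setOf_abs_sub_le_eq_euclideanBox {ι : Type*} (x₀ : EuclideanSpace ℝ ι) (d : ℝ) :
    {x : EuclideanSpace ℝ ι | ∀ j, |x j - x₀ j| ≤ d} =
      euclideanBox (fun j => x₀ j - d) (fun j => x₀ j + d) := by
  ext x
  simp only [mem_ofPred_eq, mem_preimage, mem_Icc, Pi.le_def, abs_sub_le_iff, ← forall_and]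
  exact forall_congr' fun j => by constructor <;> intro h <;> constructor <;> linarith [h.1, h.2]

theorem setIntegral_ite_abs_lt_le_mul_sqrt {α : Type*} [MeasurableSpace α] {μ : Measure α}
    {s : Set α} (hs : μ s < ⊤) {u g : α → ℝ} (hg : ∀ x, 0 ≤ g x) {a K : ℝ} (ha : 0 < a)
    (hint : IntegrableOn (fun x => g x ^ 2 / (1 + (u x / a) ^ 2)) s μ)
    (hK : ∫ x in s, g x ^ 2 / (1 + (u x / a) ^ 2) ∂μ ≤ K * a) :
    ∫ x in s, (if |u x| < a then g x else 0) ∂μ ≤ (K + μ.real s / 2) * √a := by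
  have hpt : ∀ x, (if |u x| < a then g x else 0) ≤
      g x ^ 2 / (1 + (u x / a) ^ 2) / √a + √a / 2 := fun x => by
    split_ifs with hx
    · have hu : (u x / a) ^ 2 < 1 := by
        rw [div_pow, div_lt_one (by positivity)]
        exact sq_lt_sq.2 (hx.trans_eq (abs_of_pos ha).symm)
      have hw : g x ^ 2 / 2 ≤ g x ^ 2 / (1 + (u x / a) ^ 2) :=
        div_le_div_of_nonneg_left (sq_nonneg _) (by positivity) (by linarith)
      -- AM-GM: `2 √a g ≤ g² + a`
      have hamgm : g x ≤ g x ^ 2 / 2 / √a + √a / 2 := by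
        rw [div_div, div_add_div _ _ (by positivity) two_ne_zero, le_div_iff₀ (by positivity)]
        nlinarith [sq_nonneg (g x - √a), sq_sqrt ha.le]
      exact hamgm.trans (by gcongr)
    · positivity
  calc ∫ x in s, (if |u x| < a then g x else 0) ∂μ
      ≤ ∫ x in s, (g x ^ 2 / (1 + (u x / a) ^ 2) / √a + √a / 2) ∂μ :=
        integral_mono_of_nonneg (.of_forall fun x => by
            dsimp only [Pi.zero_apply]; split_ifs <;> simp [hg])
          ((hint.div_const _).add (integrableOn_const hs.ne)) (.of_forall hpt)
    _ = (∫ x in s, g x ^ 2 / (1 + (u x / a) ^ 2) ∂μ) / √a + μ.real s * (√a / 2) := by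
        rw [integral_add (hint.div_const _) (integrableOn_const hs.ne), integral_div,
          setIntegral_const, smul_eq_mul]
    _ ≤ K * a / √a + μ.real s * (√a / 2) := by gcongr
    _ = (K + μ.real s / 2) * √a := by
        rw [mul_div_assoc, div_sqrt]
        ring

section Box

variable {n : ℕ} {lo hi : Fin (n + 1) → ℝ}

local notation "𝔼" => EuclideanSpace ℝ (Fin (n + 1))

local notation "e" i => EuclideanSpace.single i (1 : ℝ)

theorem integral_divergence_euclideanBox (hle : lo ≤ hi) (f : Fin (n + 1) → 𝔼 → ℝ)
    (f' : Fin (n + 1) → 𝔼 → StrongDual ℝ 𝔼)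
    (hf : ∀ x ∈ euclideanBox lo hi, ∀ i, HasFDerivAt (f i) (f' i x) x)
    (hint : IntegrableOn (fun x => ∑ i, f' i x (e i)) (euclideanBox lo hi)) :
    ∫ x in euclideanBox lo hi, ∑ i, f' i x (e i) =
      ∑ i, ((∫ y in Icc (lo ∘ i.succAbove) (hi ∘ i.succAbove),
          f i (WithLp.toLp 2 (i.insertNth (hi i) y))) -
        ∫ y in Icc (lo ∘ i.succAbove) (hi ∘ i.succAbove),
          f i (WithLp.toLp 2 (i.insertNth (lo i) y))) := by
  let T := (EuclideanSpace.equiv (Fin (n + 1)) ℝ).symm.toContinuousLinearMap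
  have hT := PiLp.volume_preserving_ofLp (Fin (n + 1))
  have hTemb := (MeasurableEquiv.toLp 2 (Fin (n + 1) → ℝ)).symm.measurableEmbedding
  have hfT : ∀ y ∈ Icc lo hi, ∀ i, HasFDerivAt (fun y => f i (T y)) ((f' i (T y)).comp T) y :=
    fun y hy i => (hf (T y) hy i).comp y T.hasFDerivAt
  refine (hT.setIntegral_preimage_emb hTemb (fun y => ∑ i, f' i (T y) (e i)) (Icc lo hi)).trans ?_
  exact integral_divergence_of_hasFDerivAt_off_countable' lo hi hle _ _ ∅ countable_empty
    (fun i y hy => (hfT y hy i).continuousAt.continuousWithinAt)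
    (fun y hy i => hfT y (Ioo_subset_Icc_self (pi_univ_Ioo_subset lo hi hy.1)) i)
    ((hT.integrableOn_comp_preimage hTemb).1 hint)

theorem abs_integral_divergence_euclideanBox_le (hle : lo ≤ hi) (f : Fin (n + 1) → 𝔼 → ℝ)
    (f' : Fin (n + 1) → 𝔼 → StrongDual ℝ 𝔼)
    (hf : ∀ x ∈ euclideanBox lo hi, ∀ i, HasFDerivAt (f i) (f' i x) x)
    (hint : IntegrableOn (fun x => ∑ i, f' i x (e i)) (euclideanBox lo hi))
    {B : ℝ} (hB : ∀ x ∈ euclideanBox lo hi, ∀ i, |f i x| ≤ B) :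
    |∫ x in euclideanBox lo hi, ∑ i, f' i x (e i)| ≤
      2 * B * ∑ i : Fin (n + 1), volume.real (Icc (lo ∘ i.succAbove) (hi ∘ i.succAbove)) := by
  rw [integral_divergence_euclideanBox hle f f' hf hint, Finset.mul_sum]
  refine (Finset.abs_sum_le_sum_abs _ _).trans (Finset.sum_le_sum fun i _ => ?_)
  have hface : ∀ c ∈ Icc (lo i) (hi i),
      ‖∫ y in Icc (lo ∘ i.succAbove) (hi ∘ i.succAbove), f i (WithLp.toLp 2 (i.insertNth c y))‖ ≤
        B * volume.real (Icc (lo ∘ i.succAbove) (hi ∘ i.succAbove)) := fun c hc =>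
    norm_setIntegral_le_of_norm_le_const measure_Icc_lt_top
      fun y hy => hB _ (Fin.insertNth_mem_Icc.2 ⟨hc, hy⟩) i
  calc _ ≤ _ + _ := norm_sub_le _ _
    _ ≤ _ := add_le_add (hface _ ⟨hle i, le_rfl⟩) (hface _ ⟨le_rfl, hle i⟩)
    _ = _ := by ring

theorem setIntegral_sq_norm_fderiv_div_le (hle : lo ≤ hi) {σ : 𝔼 → ℝ}
    (hσ : ∀ x ∈ euclideanBox lo hi, DifferentiableAt ℝ σ x)
    (hσ' : ∀ x ∈ euclideanBox lo hi, DifferentiableAt ℝ (fderiv ℝ σ) x)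
    {G M : ℝ} (hG : ∀ x ∈ euclideanBox lo hi, ‖fderiv ℝ σ x‖ ≤ G)
    (hM : ∀ x ∈ euclideanBox lo hi, ‖fderiv ℝ (fderiv ℝ σ) x‖ ≤ M) {a : ℝ} (ha : 0 < a) :
    ∫ x in euclideanBox lo hi, ‖fderiv ℝ σ x‖ ^ 2 / (1 + (σ x / a) ^ 2) ≤
      π / 2 * a * (2 * G * (∑ i : Fin (n + 1),
          volume.real (Icc (lo ∘ i.succAbove) (hi ∘ i.succAbove))) +
        (n + 1) * M * volume.real (euclideanBox lo hi)) := by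
  set K := euclideanBox lo hi
  let F : ℝ → ℝ := fun s => a * arctan (s / a)
  let Δ : 𝔼 → ℝ := fun x => ∑ i, fderiv ℝ (fderiv ℝ σ) x (e i) (e i)
  let f : Fin (n + 1) → 𝔼 → ℝ := fun i x => F (σ x) * fderiv ℝ σ x (e i)
  let f' : Fin (n + 1) → 𝔼 → StrongDual ℝ 𝔼 := fun i x =>
    F (σ x) • (ContinuousLinearMap.apply ℝ ℝ (e i)).comp (fderiv ℝ (fderiv ℝ σ) x) +
      fderiv ℝ σ x (e i) • (1 + (σ x / a) ^ 2)⁻¹ • fderiv ℝ σ x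
  have hf : ∀ x ∈ K, ∀ i, HasFDerivAt (f i) (f' i x) x := fun x hx i =>
    ((hasDerivAt_mul_arctan_div ha.ne' (σ x)).comp_hasFDerivAt x (hσ x hx).hasFDerivAt).mul
      ((ContinuousLinearMap.apply ℝ ℝ (e i)).hasFDerivAt.comp x (hσ' x hx).hasFDerivAt)
  have hdiv : (fun x => ∑ i, f' i x (e i)) =
      fun x => F (σ x) * Δ x + ‖fderiv ℝ σ x‖ ^ 2 / (1 + (σ x / a) ^ 2) := by
    ext x
    simp only [f', Δ, add_apply, smul_apply, ContinuousLinearMap.coe_comp, Function.comp_apply,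
      ContinuousLinearMap.apply_apply, smul_eq_mul, Finset.sum_add_distrib, Finset.mul_sum,
      norm_sq_eq_sum_sq_apply_single, Finset.sum_div]
    exact congrArg _ (Finset.sum_congr rfl fun i _ => by ring)
  have hK : IsCompact K := isCompact_euclideanBox lo hi
  have hKm : MeasurableSet K := measurableSet_Icc.preimage (WithLp.measurable_ofLp _ _)
  have hF : ∀ x, |F (σ x)| ≤ π / 2 * a := fun x => abs_mul_arctan_div_le ha.le (σ x)
  have hFΔ : ∀ x ∈ K, ‖F (σ x) * Δ x‖ ≤ π / 2 * a * ((n + 1) * M) := fun x hx => by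
    rw [Real.norm_eq_abs, abs_mul]
    refine mul_le_mul (hF x) ?_ (abs_nonneg _) (by positivity)
    simpa using (abs_sum_apply_single_single_le _).trans
      (mul_le_mul_of_nonneg_left (hM x hx) (by positivity))
  have hFΔ_int : IntegrableOn (fun x => F (σ x) * Δ x) K := by
    refine .of_bound hK.measure_lt_top (ContinuousOn.aestronglyMeasurable ?_ hKm |>.mul ?_) _
      ((ae_restrict_iff' hKm).2 (.of_forall hFΔ))
    · exact fun x hx => ((continuous_const.mul (continuous_arctan.comp
        (continuous_id.div_const a))).continuousAt.comp (hσ x hx).continuousAt).continuousWithinAt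
    · exact (Finset.measurable_sum _ fun i _ =>
        (ContinuousLinearMap.apply ℝ ℝ (e i)).measurable.comp
          (measurable_fderiv_apply_const ℝ (fderiv ℝ σ) (e i))).aestronglyMeasurable
  have henergy_int := integrableOn_sq_norm_fderiv_div (μ := volume) hK hσ hσ' a
  have hdiv_le := abs_integral_divergence_euclideanBox_le hle f f' hf
    (hdiv ▸ hFΔ_int.add henergy_int) (B := π / 2 * a * G) fun x hx i => by
      rw [abs_mul]
      exact mul_le_mul (hF x) ((abs_apply_single_le _ i).trans (hG x hx)) (abs_nonneg _)
        (by positivity)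
  rw [hdiv, integral_add hFΔ_int henergy_int] at hdiv_le
  have hFΔ_le := norm_setIntegral_le_of_norm_le_const (hK.measure_lt_top (μ := volume)) hFΔ
  rw [Real.norm_eq_abs] at hFΔ_le
  linarith [(abs_le.1 hdiv_le).2, (abs_le.1 hFΔ_le).1]

theorem setIntegral_ite_abs_lt_norm_gradient_le (hle : lo ≤ hi) {σ : 𝔼 → ℝ}
    (hσ : ∀ x ∈ euclideanBox lo hi, DifferentiableAt ℝ σ x)
    (hσ' : ∀ x ∈ euclideanBox lo hi, DifferentiableAt ℝ (fderiv ℝ σ) x)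
    {G M : ℝ} (hG : ∀ x ∈ euclideanBox lo hi, ‖fderiv ℝ σ x‖ ≤ G)
    (hM : ∀ x ∈ euclideanBox lo hi, ‖fderiv ℝ (fderiv ℝ σ) x‖ ≤ M) {a : ℝ} (ha : 0 < a) :
    ∫ x in euclideanBox lo hi, (if |σ x| < a then ‖gradient σ x‖ else 0) ≤
      (π / 2 * (2 * G * (∑ i : Fin (n + 1),
          volume.real (Icc (lo ∘ i.succAbove) (hi ∘ i.succAbove))) +
        (n + 1) * M * volume.real (euclideanBox lo hi)) +
        volume.real (euclideanBox lo hi) / 2) * √a :=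
  setIntegral_ite_abs_lt_le_mul_sqrt (isCompact_euclideanBox lo hi).measure_lt_top
    (fun x => norm_nonneg _) ha
    (by simpa only [norm_gradient_eq_norm_fderiv] using
      integrableOn_sq_norm_fderiv_div (isCompact_euclideanBox lo hi) hσ hσ' a)
    (by simpa only [norm_gradient_eq_norm_fderiv, mul_right_comm _ a] using
      setIntegral_sq_norm_fderiv_div_le hle hσ hσ' hG hM ha)

end Box

theorem stmt_0_general {n : ℕ} (x₀ : EuclideanSpace ℝ (Fin n)) (d : ℝ) (hd : 0 < d)
    (Q : Set (EuclideanSpace ℝ (Fin n)))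
    (hQ : Q = {x : EuclideanSpace ℝ (Fin n) | ∀ j, |x j - x₀ j| ≤ d})
    (Q₁ : Set (EuclideanSpace ℝ (Fin n))) (hQQ₁ : Q ⊆ Q₁)
    (σ : EuclideanSpace ℝ (Fin n) → ℝ)
    (hσdiff : ∀ x ∈ Q₁, DifferentiableAt ℝ σ x)
    (hσdiff2 : ∀ x ∈ Q₁, DifferentiableAt ℝ (fderiv ℝ σ) x)
    (M : ℝ) (hM : ∀ x ∈ Q₁, ‖fderiv ℝ (fderiv ℝ σ) x‖ ≤ M) :
    ∃ C₁ > 0, ∀ a : ℝ, 0 < a → a < 1 / 2 →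
      (∫ x in Q, (if |σ x| < a then ‖gradient σ x‖ else 0)) < C₁ * Real.sqrt a := by
  cases n with
  | zero =>
    refine ⟨1, one_pos, fun a ha _ => ?_⟩
    simpa [Subsingleton.elim (gradient σ _) 0] using sqrt_pos.2 ha
  | succ n =>
    rw [setOf_abs_sub_le_eq_euclideanBox] at hQ
    subst hQ
    have hle : (fun j => x₀ j - d) ≤ fun j => x₀ j + d := fun j => by linarith
    obtain ⟨G, hG⟩ := (isCompact_euclideanBox _ _).exists_bound_of_continuousOn fun x hx =>
      (hσdiff2 x (hQQ₁ hx)).continuousAt.continuousWithinAt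
    exact ⟨_, by positivity, fun a ha _ =>
      (setIntegral_ite_abs_lt_norm_gradient_le hle (fun x hx => hσdiff x (hQQ₁ hx))
        (fun x hx => hσdiff2 x (hQQ₁ hx)) hG (fun x hx => hM x (hQQ₁ hx)) ha).trans_lt
      (mul_lt_mul_of_pos_right (lt_add_of_le_of_pos (le_abs_self _) one_pos) (sqrt_pos.2 ha))⟩

/-- Proposition 1, first estimate: for a twice differentiable function `σ` with uniformly
bounded second derivatives on a neighbourhood `Q₁` of a closed cube `Q`, with `|σ| < 1` on `Q`,
there is a constant `C₁ > 0` independent of `a` such that for all `0 < a < 1/2`,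
`∫_Q ‖∇σ‖ · 𝟙{|σ| < a} dμ < C₁ √a`. -/
theorem stmt_0 {n : ℕ} (x₀ : EuclideanSpace ℝ (Fin n)) (d : ℝ) (hd : 0 < d)
    (Q : Set (EuclideanSpace ℝ (Fin n)))
    (hQ : Q = {x : EuclideanSpace ℝ (Fin n) | ∀ j, |x j - x₀ j| ≤ d})
    (Q₁ : Set (EuclideanSpace ℝ (Fin n))) (hQ₁open : IsOpen Q₁) (hQQ₁ : Q ⊆ Q₁)
    (σ : EuclideanSpace ℝ (Fin n) → ℝ)
    (hσdiff : ∀ x ∈ Q₁, DifferentiableAt ℝ σ x)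
    (hσdiff2 : ∀ x ∈ Q₁, DifferentiableAt ℝ (fderiv ℝ σ) x)
    (M : ℝ) (hM : ∀ x ∈ Q₁, ‖fderiv ℝ (fderiv ℝ σ) x‖ ≤ M)
    (hσlt : ∀ x ∈ Q, |σ x| < 1) :
    ∃ C₁ > 0, ∀ a : ℝ, 0 < a → a < 1 / 2 →
      (∫ x in Q, (if |σ x| < a then ‖gradient σ x‖ else 0)) < C₁ * Real.sqrt a :=
  stmt_0_general x₀ d hd Q hQ Q₁ hQQ₁ σ hσdiff hσdiff2 M hM
end

section
/- Let d > 0, c₁ > 0, and let ψ : [0,d] → ℝ be twice differentiable with |ψ(z)| < 1 and |ψ''(z)| < c₁ for all z ∈ [0,d]. Then for every a with 0 < a ≤ 1 one has ∫₀^d |ψ'(z)| · 𝟙{|ψ(z)| < a} dz < (d·(1 + 4c₁) + 2) · √a. In particular ∫₀^d |ψ'(z)| · 𝟙{|ψ(z)| < a} dz < c₂ √a with a constant c₂ depending only on c₁ and d. -/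
/-!
Cut `[0, d]` into `⌈c₁ d / √a⌉` pieces of length at most `√a / c₁`. Since `|ψ''| < c₁`, the
derivative `ψ'` varies by less than `√a` on each piece, so either `|ψ'| ≤ √a` on the whole piece,
which then contributes at most `√a` times its length, or `ψ'` has no zero there. In the second
case `ψ` is injective on the piece, and the substitution `y = ψ z` bounds its contribution by the
length `2a` of `(-a, a)`. Summing, the integral is below `√a d + 2a (c₁ d / √a + 1)`, and
`a ≤ √a` for `a ≤ 1`.
-/

open MeasureTheory Set

theorem Convex.injOn_of_hasDerivWithinAt_ne_zero {s : Set ℝ} (hs : Convex ℝ s) {f f' : ℝ → ℝ}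
    (hf : ∀ x ∈ s, HasDerivWithinAt f (f' x) s x) (hf' : ∀ x ∈ s, f' x ≠ 0) : InjOn f s := by
  have hcont : ContinuousOn f s := fun x hx => (hf x hx).continuousWithinAt
  have hint : ∀ x ∈ interior s, HasDerivWithinAt f (f' x) (interior s) x :=
    fun x hx => (hf x (interior_subset hx)).mono interior_subset
  rcases hasDerivWithinAt_forall_lt_or_forall_gt_of_forall_ne hs hf hf' with hneg | hpos
  · exact (strictAntiOn_of_hasDerivWithinAt_neg hs hcont hint
      fun x hx => hneg x (interior_subset hx)).injOn
  · exact (strictMonoOn_of_hasDerivWithinAt_pos hs hcont hint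
      fun x hx => hpos x (interior_subset hx)).injOn

theorem setIntegral_abs_deriv_mul_indicator_comp_le {f f' : ℝ → ℝ} {s t : Set ℝ}
    (hs : MeasurableSet s) (ht : MeasurableSet t) (ht_fin : volume t ≠ ⊤)
    (hf' : ∀ x ∈ s, HasDerivWithinAt f (f' x) s x) (hf : InjOn f s) :
    ∫ x in s, |f' x| * t.indicator 1 (f x) ≤ volume.real t := by
  simp_rw [← smul_eq_mul, ← integral_image_eq_integral_abs_deriv_smul hs hf' hf,
    integral_indicator_one ht, measureReal_restrict_apply ht]
  exact measureReal_mono inter_subset_left ht_fin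

theorem setIntegral_Ioc_ite_abs_lt_le_of_abs_deriv2_le {ψ ψ' ψ'' : ℝ → ℝ} {u v a m C : ℝ}
    (huv : u ≤ v) (ha : 0 ≤ a) (hψ' : ∀ z ∈ Icc u v, HasDerivWithinAt ψ (ψ' z) (Icc u v) z)
    (hψ'' : ∀ z ∈ Icc u v, HasDerivWithinAt ψ' (ψ'' z) (Icc u v) z)
    (hψ''_le : ∀ z ∈ Icc u v, |ψ'' z| ≤ C) (hlen : C * (v - u) ≤ m) :
    ∫ z in Ioc u v, (if |ψ z| < a then |ψ' z| else 0) ≤ m * (v - u) + 2 * a := by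
  have hC : 0 ≤ C := (abs_nonneg _).trans (hψ''_le u ⟨le_rfl, huv⟩)
  have hm : 0 ≤ m := (mul_nonneg hC (sub_nonneg.2 huv)).trans hlen
  by_cases hsmall : ∃ z₀ ∈ Icc u v, |ψ' z₀| ≤ m - C * (v - u)
  · obtain ⟨z₀, hz₀, hψ'z₀⟩ := hsmall
    have hbound : ∀ z ∈ Icc u v, |ψ' z| ≤ m := by
      intro z hz
      have hlip := (convex_Icc u v).norm_image_sub_le_of_norm_hasDerivWithin_le hψ'' hψ''_le
        hz₀ hz
      have hdist : ‖z - z₀‖ ≤ v - u := abs_sub_le_iff.2 ⟨by linarith [hz.2, hz₀.1],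
        by linarith [hz.1, hz₀.2]⟩
      have hψ'_close : |ψ' z - ψ' z₀| ≤ C * (v - u) := hlip.trans (by gcongr)
      linarith [abs_sub_abs_le_abs_sub (ψ' z) (ψ' z₀)]
    calc ∫ z in Ioc u v, (if |ψ z| < a then |ψ' z| else 0)
        ≤ ‖∫ z in Ioc u v, (if |ψ z| < a then |ψ' z| else 0)‖ := Real.le_norm_self _
      _ ≤ m * volume.real (Ioc u v) := by
        refine norm_setIntegral_le_of_norm_le_const measure_Ioc_lt_top fun z hz => ?_
        split_ifs
        · simpa using hbound z (Ioc_subset_Icc_self hz)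
        · simpa using hm
      _ ≤ m * (v - u) + 2 * a := by
        rw [Real.volume_real_Ioc_of_le huv]
        linarith
  · push Not at hsmall
    have hinj : InjOn ψ (Icc u v) := (convex_Icc u v).injOn_of_hasDerivWithinAt_ne_zero hψ'
      fun z hz => abs_pos.1 ((sub_nonneg.2 hlen).trans_lt (hsmall z hz))
    calc ∫ z in Ioc u v, (if |ψ z| < a then |ψ' z| else 0)
        = ∫ z in Ioc u v, |ψ' z| * (Ioo (-a) a).indicator 1 (ψ z) := by
          simp only [indicator_apply, mem_Ioo, ← abs_lt, Pi.one_apply, mul_ite, mul_one, mul_zero]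
      _ ≤ volume.real (Ioo (-a) a) :=
        setIntegral_abs_deriv_mul_indicator_comp_le measurableSet_Ioc measurableSet_Ioo
          measure_Ioo_lt_top.ne
          (fun z hz => (hψ' z (Ioc_subset_Icc_self hz)).mono Ioc_subset_Icc_self)
          (hinj.mono Ioc_subset_Icc_self)
      _ ≤ m * (v - u) + 2 * a := by
        rw [Real.volume_real_Ioo, max_eq_left (by linarith)]
        linarith [mul_nonneg hm (sub_nonneg.2 huv)]

theorem setIntegral_Icc_le_of_forall_Ioc_le {F : ℝ → ℝ} {d δ M B : ℝ} (hd : 0 < d) (hδ : 0 < δ)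
    (hF : IntegrableOn F (Icc 0 d))
    (hpiece : ∀ u v, 0 ≤ u → u ≤ v → v ≤ d → v - u ≤ δ →
      ∫ z in Ioc u v, F z ≤ M * (v - u) + B) :
    ∫ z in Icc 0 d, F z ≤ M * d + B * ⌈d / δ⌉₊ := by
  set n := ⌈d / δ⌉₊
  have hn : (0 : ℝ) < n := Nat.cast_pos.2 (Nat.ceil_pos.2 (div_pos hd hδ))
  set L := d / n
  have hL : 0 < L := div_pos hd hn
  have hLδ : L ≤ δ := by
    rw [div_le_iff₀ hn, ← div_le_iff₀' hδ]
    exact Nat.le_ceil _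
  have hnL : n * L = d := mul_div_cancel₀ d hn.ne'
  have hmem : ∀ k ≤ n, 0 ≤ k * L ∧ k * L ≤ d := fun k hk =>
    ⟨by positivity, hnL ▸ by gcongr⟩
  have hstep : ∀ k : ℕ, ((k + 1 : ℕ) : ℝ) * L - k * L = L := fun k => by push_cast; ring
  have hsubinterval : ∀ k < n, ∫ z in (k * L : ℝ)..((k + 1 : ℕ) * L), F z ≤ M * L + B := by
    intro k hk
    have hle : (k * L : ℝ) ≤ (k + 1 : ℕ) * L := by rw [← sub_nonneg, hstep]; exact hL.le
    rw [intervalIntegral.integral_of_le hle]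
    simpa only [hstep] using
      hpiece _ _ (hmem k hk.le).1 hle (hmem (k + 1) hk).2 ((hstep k).trans_le hLδ)
  have hint : ∀ k < n, IntervalIntegrable F volume (k * L) ((k + 1 : ℕ) * L) := by
    intro k hk
    refine (intervalIntegrable_iff_integrableOn_Icc_of_le ?_).2
      (hF.mono_set (Icc_subset_Icc (hmem k hk.le).1 (hmem (k + 1) hk).2))
    rw [← sub_nonneg, hstep]; exact hL.le
  calc ∫ z in Icc 0 d, F z
      = ∑ k ∈ Finset.range n, ∫ z in (k * L : ℝ)..((k + 1 : ℕ) * L), F z := by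
        rw [intervalIntegral.sum_integral_adjacent_intervals hint, Nat.cast_zero, zero_mul, hnL,
          intervalIntegral.integral_of_le hd.le, integral_Icc_eq_integral_Ioc]
    _ ≤ ∑ _k ∈ Finset.range n, (M * L + B) := Finset.sum_le_sum fun k hk =>
        hsubinterval k (Finset.mem_range.1 hk)
    _ = M * d + B * n := by
        rw [Finset.sum_const, Finset.card_range, nsmul_eq_mul, ← hnL]; ring

theorem integrableOn_ite_abs_lt {ψ ψ' : ℝ → ℝ} {s : Set ℝ} (hs : MeasurableSet s)
    (hψ : ContinuousOn ψ s) (hψ' : IntegrableOn ψ' s) (a : ℝ) :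
    IntegrableOn (fun z => if |ψ z| < a then |ψ' z| else 0) s := by
  have hsel : Measurable fun p : ℝ × ℝ => if |p.1| < a then |p.2| else 0 :=
    Measurable.ite (measurableSet_lt measurable_fst.abs measurable_const) measurable_snd.abs
      measurable_const
  refine hψ'.norm.mono'
    (hsel.comp_aemeasurable ((hψ.aemeasurable hs).prodMk hψ'.aemeasurable)).aestronglyMeasurable
    (Filter.Eventually.of_forall fun z => ?_)
  split_ifs <;> simp

theorem stmt_2_general (d c₁ : ℝ) (hd : 0 < d) (hc₁ : 0 < c₁)
    (ψ ψ' ψ'' : ℝ → ℝ)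
    (hψ' : ∀ z ∈ Set.Icc (0 : ℝ) d, HasDerivWithinAt ψ (ψ' z) (Set.Icc 0 d) z)
    (hψ'' : ∀ z ∈ Set.Icc (0 : ℝ) d, HasDerivWithinAt ψ' (ψ'' z) (Set.Icc 0 d) z)
    (hψ''lt : ∀ z ∈ Set.Icc (0 : ℝ) d, |ψ'' z| < c₁)
    (a : ℝ) (ha0 : 0 < a) (ha1 : a ≤ 1) :
    (∫ z in Set.Icc (0 : ℝ) d, (if |ψ z| < a then |ψ' z| else 0)) <
      (d * (1 + 4 * c₁) + 2) * Real.sqrt a := by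
  have hsqrt : 0 < √a := Real.sqrt_pos.2 ha0
  have hint := integrableOn_ite_abs_lt measurableSet_Icc
    (fun z hz => (hψ' z hz).continuousWithinAt)
    (ContinuousOn.integrableOn_Icc fun z hz => (hψ'' z hz).continuousWithinAt) a
  have hpiece : ∀ u v, 0 ≤ u → u ≤ v → v ≤ d → v - u ≤ √a / c₁ →
      ∫ z in Ioc u v, (if |ψ z| < a then |ψ' z| else 0) ≤ √a * (v - u) + 2 * a := by
    intro u v hu huv hv hlen
    have hsub : Icc u v ⊆ Icc 0 d := Icc_subset_Icc hu hv
    exact setIntegral_Ioc_ite_abs_lt_le_of_abs_deriv2_le huv ha0.le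
      (fun z hz => (hψ' z (hsub hz)).mono hsub) (fun z hz => (hψ'' z (hsub hz)).mono hsub)
      (fun z hz => (hψ''lt z (hsub hz)).le) ((le_div_iff₀' hc₁).1 hlen)
  have hceil : (⌈d / (√a / c₁)⌉₊ : ℝ) < d * c₁ / √a + 1 := by
    rw [div_div_eq_mul_div]
    exact Nat.ceil_lt_add_one (by positivity)
  calc ∫ z in Icc 0 d, (if |ψ z| < a then |ψ' z| else 0)
      ≤ √a * d + 2 * a * ⌈d / (√a / c₁)⌉₊ :=
        setIntegral_Icc_le_of_forall_Ioc_le hd (div_pos hsqrt hc₁) hint hpiece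
    _ < √a * d + 2 * a * (d * c₁ / √a + 1) := by gcongr
    _ = √a * d + 2 * d * c₁ * (a / √a) + 2 * a := by ring
    _ ≤ (d * (1 + 4 * c₁) + 2) * √a := by
        rw [Real.div_sqrt]
        nlinarith [Real.le_sqrt_self_iff.2 ha1, mul_pos hd hc₁]

/-- Lemma 2.1, first estimate (explicit constant): for `ψ : [0,d] → ℝ` twice differentiable
with `|ψ| < 1` and `|ψ''| < c₁`, and any `0 < a ≤ 1`,
`∫₀^d |ψ'| · 𝟙{|ψ| < a} dz < (d(1 + 4c₁) + 2) √a`. -/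
theorem stmt_2 (d c₁ : ℝ) (hd : 0 < d) (hc₁ : 0 < c₁)
    (ψ ψ' ψ'' : ℝ → ℝ)
    (hψ' : ∀ z ∈ Set.Icc (0 : ℝ) d, HasDerivWithinAt ψ (ψ' z) (Set.Icc 0 d) z)
    (hψ'' : ∀ z ∈ Set.Icc (0 : ℝ) d, HasDerivWithinAt ψ' (ψ'' z) (Set.Icc 0 d) z)
    (hψlt : ∀ z ∈ Set.Icc (0 : ℝ) d, |ψ z| < 1)
    (hψ''lt : ∀ z ∈ Set.Icc (0 : ℝ) d, |ψ'' z| < c₁)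
    (a : ℝ) (ha0 : 0 < a) (ha1 : a ≤ 1) :
    (∫ z in Set.Icc (0 : ℝ) d, (if |ψ z| < a then |ψ' z| else 0)) <
      (d * (1 + 4 * c₁) + 2) * Real.sqrt a :=
  stmt_2_general d c₁ hd hc₁ ψ ψ' ψ'' hψ' hψ'' hψ''lt a ha0 ha1
end

section
/- Let d > 0, c₁ > 0, and let f : (0,1] → ℝ be a continuous, strictly decreasing, positive function such that ξ ↦ f(ξ)·√ξ is bounded on (0,1] and the integral ∫₀¹ f(ξ)/√ξ dξ converges. Then there exists a constant c₃ > 0, depending only on c₁, d and f, such that for every a with 0 < a < 1 and every twice differentiable ψ : [0,d] → ℝ with |ψ(z)| < 1 and |ψ''(z)| < c₁ for all z ∈ [0,d], one has ∫₀^d |ψ'(z)| · 𝟙{|ψ(z)| ≥ a} · f(|ψ(z)|) dz < c₃. -/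
/-!
Split `{a ≤ |ψ|}` into the dyadic bands `δ < |ψ| ≤ 2δ`, `δ = 2^{-(k+1)}`. On such a band
`f(|ψ|) ≤ f(δ)` and, by AM–GM, `|ψ'| ≤ √δ (1 + ψ'²/δ)`. The weight `w_δ(u) = 1/(1 + (u/δ)²)`
is `≥ 1/5` there and is the derivative of `H_δ(u) = δ arctan(u/δ)`, with `|H_δ| ≤ 2δ`.
Integrating `(ψ' · H_δ ∘ ψ)' = ψ'' · H_δ ∘ ψ + w_δ(ψ) ψ'²` over `[0,d]`, and using the Landau
bound `|ψ'| ≤ 2/d + c₁d`, gives `∫ w_δ(ψ) ψ'² = O(δ)`. So each band contributes `O(f(δ)√δ)`,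
and `∑ f(δ)√δ ≤ 2 ∫₀¹ f(ξ)/√ξ dξ` by comparing `f(δ)√δ` with the integral over `(δ/2, δ]`.
-/

open MeasureTheory Set Real

noncomputable def lorentzian (δ u : ℝ) : ℝ := 1 / (1 + (u / δ) ^ 2)

lemma continuous_lorentzian (δ : ℝ) : Continuous (lorentzian δ) := by
  unfold lorentzian
  exact continuous_const.div (by fun_prop) fun u => by positivity

lemma lorentzian_nonneg (δ u : ℝ) : 0 ≤ lorentzian δ u := by
  unfold lorentzian; positivity

lemma one_fifth_le_lorentzian {δ u : ℝ} (hδ : 0 < δ) (hu : |u| ≤ 2 * δ) :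
    1 / 5 ≤ lorentzian δ u := by
  have : (u / δ) ^ 2 ≤ 4 := by
    rw [div_pow, div_le_iff₀ (by positivity), ← sq_abs]
    nlinarith [abs_nonneg u]
  unfold lorentzian
  gcongr
  linarith

lemma hasDerivAt_mul_arctan_div_s3 {δ : ℝ} (hδ : δ ≠ 0) (u : ℝ) :
    HasDerivAt (fun u => δ * arctan (u / δ)) (lorentzian δ u) u := by
  have := ((hasDerivAt_arctan (u / δ)).comp u ((hasDerivAt_id u).div_const δ)).const_mul δ
  refine this.congr_deriv ?_
  simp only [lorentzian]
  field_simp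

lemma abs_mul_arctan_div_le_s3 {δ : ℝ} (hδ : 0 ≤ δ) (u : ℝ) : |δ * arctan (u / δ)| ≤ 2 * δ := by
  rw [abs_mul, abs_of_nonneg hδ, mul_comm]
  gcongr
  rw [abs_le]
  constructor <;>
    linarith [arctan_lt_pi_div_two (u / δ), neg_pi_div_two_lt_arctan (u / δ), pi_lt_four]

lemma abs_deriv_le_of_abs_le {d A c : ℝ} (hd : 0 < d) {ψ ψ' ψ'' : ℝ → ℝ}
    (hψ : ∀ z ∈ Icc 0 d, HasDerivWithinAt ψ (ψ' z) (Icc 0 d) z)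
    (hψ' : ∀ z ∈ Icc 0 d, HasDerivWithinAt ψ' (ψ'' z) (Icc 0 d) z)
    (hψA : ∀ z ∈ Icc 0 d, |ψ z| ≤ A) (hψ''c : ∀ z ∈ Icc 0 d, |ψ'' z| ≤ c) :
    ∀ z ∈ Icc 0 d, |ψ' z| ≤ 2 * A / d + c * d := by
  have h0 : (0 : ℝ) ∈ Icc 0 d := left_mem_Icc.2 hd.le
  have hd' : d ∈ Icc 0 d := right_mem_Icc.2 hd.le
  obtain ⟨ξ, hξ, hslope⟩ := exists_hasDerivAt_eq_slope ψ ψ' hd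
    (fun z hz => (hψ z hz).continuousWithinAt)
    fun z hz => (hψ z (Ioo_subset_Icc_self hz)).hasDerivAt (Icc_mem_nhds hz.1 hz.2)
  have hξ' : ξ ∈ Icc 0 d := Ioo_subset_Icc_self hξ
  have hmean : |ψ' ξ| ≤ 2 * A / d := by
    rw [hslope, sub_zero, abs_div, abs_of_pos hd]
    gcongr
    linarith [abs_sub (ψ d) (ψ 0), hψA d hd', hψA 0 h0]
  intro z hz
  have hlip : |ψ' z - ψ' ξ| ≤ c * |z - ξ| := by
    simpa only [Real.norm_eq_abs] using
      (convex_Icc 0 d).norm_image_sub_le_of_norm_hasDerivWithin_le hψ' hψ''c hξ' hz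
  have hzξ : |z - ξ| ≤ d :=
    abs_sub_le_iff.2 ⟨by linarith [hz.2, hξ'.1], by linarith [hz.1, hξ'.2]⟩
  have hc : 0 ≤ c := (abs_nonneg _).trans (hψ''c z hz)
  have : c * |z - ξ| ≤ c * d := by gcongr
  linarith [abs_sub_abs_le_abs_sub (ψ' z) (ψ' ξ)]

lemma setIntegral_comp_mul_deriv_sq_le {d M c K : ℝ} (hd : 0 ≤ d) {ψ ψ' ψ'' g H : ℝ → ℝ}
    (hψ : ∀ z ∈ Icc 0 d, HasDerivWithinAt ψ (ψ' z) (Icc 0 d) z)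
    (hψ' : ∀ z ∈ Icc 0 d, HasDerivWithinAt ψ' (ψ'' z) (Icc 0 d) z)
    (hψ'M : ∀ z ∈ Icc 0 d, |ψ' z| ≤ M) (hψ''c : ∀ z ∈ Icc 0 d, |ψ'' z| ≤ c)
    (hH : ∀ u, HasDerivAt H (g u) u) (hg : Continuous g) (hHK : ∀ u, |H u| ≤ K) :
    ∫ z in Icc 0 d, g (ψ z) * ψ' z ^ 2 ≤ (2 * M + c * d) * K := by
  have hψc : ContinuousOn ψ (Icc 0 d) := fun z hz => (hψ z hz).continuousWithinAt
  have hψ'c : ContinuousOn ψ' (Icc 0 d) := fun z hz => (hψ' z hz).continuousWithinAt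
  have hHc : Continuous H := continuous_iff_continuousAt.2 fun u => (hH u).continuousAt
  have hc : 0 ≤ c := (abs_nonneg _).trans (hψ''c 0 (left_mem_Icc.2 hd))
  have hderiv : ∀ z ∈ Ioo 0 d, HasDerivAt (fun z => ψ' z * H (ψ z))
      (ψ'' z * H (ψ z) + ψ' z * (g (ψ z) * ψ' z)) z := fun z hz =>
    have hn := Icc_mem_nhds hz.1 hz.2
    ((hψ' z (Ioo_subset_Icc_self hz)).hasDerivAt hn).mul
      ((hH (ψ z)).comp z ((hψ z (Ioo_subset_Icc_self hz)).hasDerivAt hn))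
  have hcont : ContinuousOn (fun z => g (ψ z) * ψ' z ^ 2) (Icc 0 d) :=
    (hg.comp_continuousOn hψc).mul (hψ'c.pow 2)
  -- A one-sided FTC suffices, since `ψ'' * H ∘ ψ ≥ -c K`; so `ψ''` need not be integrable.
  have hftc := intervalIntegral.integral_le_sub_of_hasDeriv_right_of_le
    (g := fun z => ψ' z * H (ψ z)) (φ := fun z => g (ψ z) * ψ' z ^ 2 - c * K) hd
    (hψ'c.mul (hHc.comp_continuousOn hψc)) (fun z hz => (hderiv z hz).hasDerivWithinAt)
    ((hcont.integrableOn_compact isCompact_Icc).sub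
      (integrableOn_const (C := c * K) measure_Icc_lt_top.ne)) fun z hz => by
      have : |ψ'' z * H (ψ z)| ≤ c * K := by
        rw [abs_mul]
        exact mul_le_mul (hψ''c z (Ioo_subset_Icc_self hz)) (hHK _) (abs_nonneg _) hc
      linarith [(abs_le.1 this).1, show ψ' z * (g (ψ z) * ψ' z) = g (ψ z) * ψ' z ^ 2 by ring]
  have hbdry : ∀ z ∈ Icc 0 d, |ψ' z * H (ψ z)| ≤ M * K := fun z hz => by
    rw [abs_mul]
    exact mul_le_mul (hψ'M z hz) (hHK _) (abs_nonneg _) ((abs_nonneg _).trans (hψ'M z hz))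
  rw [intervalIntegral.integral_sub (hcont.intervalIntegrable_of_Icc hd)
    intervalIntegrable_const, intervalIntegral.integral_of_le hd, ← integral_Icc_eq_integral_Ioc,
    intervalIntegral.integral_const, smul_eq_mul, sub_zero] at hftc
  linarith [abs_le.1 (hbdry d (right_mem_Icc.2 hd)), abs_le.1 (hbdry 0 (left_mem_Icc.2 hd))]

noncomputable def dyadic (k : ℕ) : ℝ := (1 / 2) ^ (k + 1)

lemma dyadic_mem_Ioc (k : ℕ) : dyadic k ∈ Ioc (0 : ℝ) 1 :=
  ⟨by unfold dyadic; positivity, pow_le_one₀ (by norm_num) (by norm_num)⟩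

lemma dyadic_antitone : Antitone dyadic := fun _ _ h =>
  pow_le_pow_of_le_one (by norm_num) (by norm_num) (by omega)

lemma dyadic_succ (k : ℕ) : dyadic (k + 1) = dyadic k / 2 := by
  unfold dyadic; ring

noncomputable def bandMajorant (δ u v : ℝ) : ℝ := 1 + 5 / δ * (lorentzian δ u * v ^ 2)

lemma bandMajorant_nonneg {δ : ℝ} (hδ : 0 ≤ δ) (u v : ℝ) : 0 ≤ bandMajorant δ u v := by
  have := lorentzian_nonneg δ u
  unfold bandMajorant; positivity

lemma continuousOn_bandMajorant {s : Set ℝ} {ψ ψ' : ℝ → ℝ} (δ : ℝ) (hψ : ContinuousOn ψ s)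
    (hψ' : ContinuousOn ψ' s) : ContinuousOn (fun z => bandMajorant δ (ψ z) (ψ' z)) s :=
  continuousOn_const.add
    (continuousOn_const.mul (((continuous_lorentzian δ).comp_continuousOn hψ).mul (hψ'.pow 2)))

lemma abs_le_sqrt_mul_bandMajorant {δ u : ℝ} (hδ : 0 < δ) (hu : |u| ≤ 2 * δ) (v : ℝ) :
    |v| ≤ √δ * bandMajorant δ u v := by
  have hL : v ^ 2 / δ ≤ 5 / δ * (lorentzian δ u * v ^ 2) := by
    rw [div_mul_eq_mul_div, ← mul_assoc]
    gcongr
    nlinarith [one_fifth_le_lorentzian hδ hu, sq_nonneg v]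
  have hs : 0 < √δ := sqrt_pos.2 hδ
  have hamgm : |v| ≤ √δ * (1 + v ^ 2 / δ) := by
    have : √δ * (1 + v ^ 2 / δ) = (δ + v ^ 2) / √δ := by
      field_simp
      rw [sq_sqrt hδ.le]
    rw [this, le_div_iff₀ hs]
    nlinarith [sq_nonneg (√δ - |v|), sq_abs v, sq_sqrt hδ.le]
  exact hamgm.trans (by unfold bandMajorant; gcongr)

lemma setIntegral_bandMajorant_le {d M c δ : ℝ} (hd : 0 ≤ d) (hδ : 0 < δ) {ψ ψ' ψ'' : ℝ → ℝ}
    (hψ : ∀ z ∈ Icc 0 d, HasDerivWithinAt ψ (ψ' z) (Icc 0 d) z)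
    (hψ' : ∀ z ∈ Icc 0 d, HasDerivWithinAt ψ' (ψ'' z) (Icc 0 d) z)
    (hψ'M : ∀ z ∈ Icc 0 d, |ψ' z| ≤ M) (hψ''c : ∀ z ∈ Icc 0 d, |ψ'' z| ≤ c) :
    ∫ z in Icc 0 d, bandMajorant δ (ψ z) (ψ' z) ≤ d + 10 * (2 * M + c * d) := by
  have henergy := setIntegral_comp_mul_deriv_sq_le hd hψ hψ' hψ'M hψ''c
    (hasDerivAt_mul_arctan_div_s3 hδ.ne') (continuous_lorentzian δ) (abs_mul_arctan_div_le_s3 hδ.le)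
  have hψc : ContinuousOn ψ (Icc 0 d) := fun z hz => (hψ z hz).continuousWithinAt
  have hψ'c : ContinuousOn ψ' (Icc 0 d) := fun z hz => (hψ' z hz).continuousWithinAt
  have hint : IntegrableOn (fun z => lorentzian δ (ψ z) * ψ' z ^ 2) (Icc 0 d) :=
    (((continuous_lorentzian δ).comp_continuousOn hψc).mul (hψ'c.pow 2)).integrableOn_compact
      isCompact_Icc
  unfold bandMajorant
  rw [integral_add (integrableOn_const (C := (1 : ℝ)) measure_Icc_lt_top.ne) (hint.const_mul _),
    integral_const_mul, setIntegral_const, smul_eq_mul, mul_one, measureReal_def,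
    Real.volume_Icc, sub_zero, ENNReal.toReal_ofReal hd]
  calc _ ≤ d + 5 / δ * ((2 * M + c * d) * (2 * δ)) := by gcongr
    _ = d + 10 * (2 * M + c * d) := by field_simp; ring

lemma ite_le_sum_bandMajorant {f : ℝ → ℝ} (hf : AntitoneOn f (Ioc 0 1))
    (hf0 : ∀ ξ ∈ Ioc (0 : ℝ) 1, 0 ≤ f ξ) {n : ℕ} {a u : ℝ} (hn : (1 / 2 : ℝ) ^ n < a)
    (hu : |u| ≤ 1) (v : ℝ) :
    (if a ≤ |u| then |v| * f |u| else 0) ≤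
      ∑ k ∈ Finset.range n, f (dyadic k) * √(dyadic k) * bandMajorant (dyadic k) u v := by
  have hterm : ∀ k, 0 ≤ f (dyadic k) * √(dyadic k) * bandMajorant (dyadic k) u v := fun k =>
    mul_nonneg (mul_nonneg (hf0 _ (dyadic_mem_Ioc k)) (sqrt_nonneg _))
      (bandMajorant_nonneg (dyadic_mem_Ioc k).1.le u v)
  split_ifs with hau
  swap
  · exact Finset.sum_nonneg fun k _ => hterm k
  have hu0 : 0 < |u| := (pow_pos (by norm_num) n).trans (hn.trans_le hau)
  obtain ⟨k, hk, hk'⟩ := exists_nat_pow_near_of_lt_one hu0 hu (by norm_num : (0 : ℝ) < 1 / 2)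
    (by norm_num)
  have hkn : k < n := (pow_lt_pow_iff_right_of_lt_one₀ (by norm_num) (by norm_num)).1
    (hn.trans_le (hau.trans hk'))
  have hu2 : |u| ≤ 2 * dyadic k := hk'.trans_eq (by unfold dyadic; ring)
  calc |v| * f |u|
      ≤ √(dyadic k) * bandMajorant (dyadic k) u v * f (dyadic k) :=
        mul_le_mul (abs_le_sqrt_mul_bandMajorant (dyadic_mem_Ioc k).1 hu2 v)
          (hf (dyadic_mem_Ioc k) ⟨hu0, hu⟩ hk.le) (hf0 _ ⟨hu0, hu⟩)
          (mul_nonneg (sqrt_nonneg _) (bandMajorant_nonneg (dyadic_mem_Ioc k).1.le u v))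
    _ = f (dyadic k) * √(dyadic k) * bandMajorant (dyadic k) u v := by ring
    _ ≤ _ := Finset.single_le_sum (fun j _ => hterm j) (Finset.mem_range.2 hkn)

lemma mul_sqrt_le_two_mul_integral {f : ℝ → ℝ} (hf : AntitoneOn f (Ioc 0 1))
    (hf0 : ∀ ξ ∈ Ioc (0 : ℝ) 1, 0 ≤ f ξ)
    (hfint : IntegrableOn (fun ξ => f ξ / √ξ) (Ioc 0 1)) {δ : ℝ} (hδ : δ ∈ Ioc (0 : ℝ) 1) :
    f δ * √δ ≤ 2 * ∫ ξ in δ / 2..δ, f ξ / √ξ := by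
  have hsub : Icc (δ / 2) δ ⊆ Ioc 0 1 := fun ξ hξ => ⟨by linarith [hξ.1, hδ.1], hξ.2.trans hδ.2⟩
  have hmono : ∫ _ in δ / 2..δ, f δ / √δ ≤ ∫ ξ in δ / 2..δ, f ξ / √ξ :=
    intervalIntegral.integral_mono_on (by linarith [hδ.1]) intervalIntegrable_const
      ((intervalIntegrable_iff_integrableOn_Icc_of_le (by linarith [hδ.1])).2
        (hfint.mono_set hsub)) fun ξ hξ =>
        div_le_div₀ (hf0 ξ (hsub hξ)) (hf (hsub hξ) hδ hξ.2) (sqrt_pos.2 (hsub hξ).1)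
          (sqrt_le_sqrt hξ.2)
  rw [intervalIntegral.integral_const, smul_eq_mul] at hmono
  rw [show (δ - δ / 2) * (f δ / √δ) = f δ * (δ / √δ) / 2 by ring, div_sqrt] at hmono
  linarith

lemma sum_dyadic_mul_sqrt_le {f : ℝ → ℝ} (hf : AntitoneOn f (Ioc 0 1))
    (hf0 : ∀ ξ ∈ Ioc (0 : ℝ) 1, 0 ≤ f ξ) (hfint : IntegrableOn (fun ξ => f ξ / √ξ) (Ioc 0 1))
    (n : ℕ) :
    ∑ k ∈ Finset.range n, f (dyadic k) * √(dyadic k) ≤ 2 * ∫ ξ in Ioc 0 1, f ξ / √ξ := by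
  have hint : ∀ j k, IntervalIntegrable (fun ξ => f ξ / √ξ) volume (dyadic j) (dyadic k) :=
    fun j k => (hfint.mono_set fun ξ hξ =>
      ⟨(lt_min (dyadic_mem_Ioc j).1 (dyadic_mem_Ioc k).1).trans_le hξ.1,
        hξ.2.trans (max_le (dyadic_mem_Ioc j).2 (dyadic_mem_Ioc k).2)⟩).intervalIntegrable
  calc ∑ k ∈ Finset.range n, f (dyadic k) * √(dyadic k)
      ≤ ∑ k ∈ Finset.range n, 2 * ∫ ξ in dyadic (k + 1)..dyadic k, f ξ / √ξ :=
        Finset.sum_le_sum fun k _ => by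
          rw [dyadic_succ]
          exact mul_sqrt_le_two_mul_integral hf hf0 hfint (dyadic_mem_Ioc k)
    _ = 2 * ∫ ξ in dyadic n..dyadic 0, f ξ / √ξ := by
        rw [← Finset.mul_sum, Finset.sum_congr rfl fun k _ => intervalIntegral.integral_symm _ _,
          Finset.sum_neg_distrib, intervalIntegral.sum_integral_adjacent_intervals
            fun k _ => hint k (k + 1), ← intervalIntegral.integral_symm]
    _ ≤ 2 * ∫ ξ in Ioc 0 1, f ξ / √ξ := by
        rw [intervalIntegral.integral_of_le (dyadic_antitone n.zero_le)]
        gcongr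
        · filter_upwards [ae_restrict_mem measurableSet_Ioc] with ξ hξ
          exact div_nonneg (hf0 ξ hξ) (sqrt_nonneg ξ)
        · exact (dyadic_mem_Ioc n).1.le
        · exact (dyadic_mem_Ioc 0).2

lemma setIntegral_ite_abs_deriv_mul_le {d M c a : ℝ} (hd : 0 ≤ d) (ha : 0 < a) {f : ℝ → ℝ}
    (hf : AntitoneOn f (Ioc 0 1)) (hf0 : ∀ ξ ∈ Ioc (0 : ℝ) 1, 0 ≤ f ξ)
    (hfint : IntegrableOn (fun ξ => f ξ / √ξ) (Ioc 0 1)) {ψ ψ' ψ'' : ℝ → ℝ}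
    (hψ : ∀ z ∈ Icc 0 d, HasDerivWithinAt ψ (ψ' z) (Icc 0 d) z)
    (hψ' : ∀ z ∈ Icc 0 d, HasDerivWithinAt ψ' (ψ'' z) (Icc 0 d) z)
    (hψ1 : ∀ z ∈ Icc 0 d, |ψ z| ≤ 1) (hψ'M : ∀ z ∈ Icc 0 d, |ψ' z| ≤ M)
    (hψ''c : ∀ z ∈ Icc 0 d, |ψ'' z| ≤ c) :
    ∫ z in Icc 0 d, (if a ≤ |ψ z| then |ψ' z| * f |ψ z| else 0) ≤
      2 * (∫ ξ in Ioc 0 1, f ξ / √ξ) * (d + 10 * (2 * M + c * d)) := by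
  set C := d + 10 * (2 * M + c * d)
  set I := ∫ ξ in Ioc 0 1, f ξ / √ξ
  obtain ⟨n, hn⟩ := exists_pow_lt_of_lt_one ha (by norm_num : (1 / 2 : ℝ) < 1)
  have hψc : ContinuousOn ψ (Icc 0 d) := fun z hz => (hψ z hz).continuousWithinAt
  have hψ'c : ContinuousOn ψ' (Icc 0 d) := fun z hz => (hψ' z hz).continuousWithinAt
  have hband : ∀ k, IntegrableOn (fun z => bandMajorant (dyadic k) (ψ z) (ψ' z)) (Icc 0 d) :=
    fun k => (continuousOn_bandMajorant _ hψc hψ'c).integrableOn_compact isCompact_Icc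
  calc ∫ z in Icc 0 d, (if a ≤ |ψ z| then |ψ' z| * f |ψ z| else 0)
      ≤ ∫ z in Icc 0 d, ∑ k ∈ Finset.range n,
          f (dyadic k) * √(dyadic k) * bandMajorant (dyadic k) (ψ z) (ψ' z) := by
        refine integral_mono_of_nonneg (ae_restrict_of_forall_mem measurableSet_Icc fun z hz => ?_)
          (integrable_finsetSum _ fun k _ => (hband k).const_mul _)
          (ae_restrict_of_forall_mem measurableSet_Icc fun z hz =>
            ite_le_sum_bandMajorant hf hf0 hn (hψ1 z hz) (ψ' z))
        dsimp only [Pi.zero_apply]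
        split_ifs with h
        · exact mul_nonneg (abs_nonneg _) (hf0 _ ⟨ha.trans_le h, hψ1 z hz⟩)
        · exact le_rfl
    _ = ∑ k ∈ Finset.range n,
          f (dyadic k) * √(dyadic k) * ∫ z in Icc 0 d, bandMajorant (dyadic k) (ψ z) (ψ' z) := by
        rw [integral_finsetSum _ fun k _ => (hband k).const_mul _]
        simp_rw [integral_const_mul]
    _ ≤ ∑ k ∈ Finset.range n, f (dyadic k) * √(dyadic k) * C := by
        gcongr with k
        · exact mul_nonneg (hf0 _ (dyadic_mem_Ioc k)) (sqrt_nonneg _)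
        · exact setIntegral_bandMajorant_le hd (dyadic_mem_Ioc k).1 hψ hψ' hψ'M hψ''c
    _ ≤ 2 * I * C := by
        rw [← Finset.sum_mul]
        have hM : 0 ≤ M := (abs_nonneg _).trans (hψ'M 0 (left_mem_Icc.2 hd))
        have hc : 0 ≤ c := (abs_nonneg _).trans (hψ''c 0 (left_mem_Icc.2 hd))
        exact mul_le_mul_of_nonneg_right (sum_dyadic_mul_sqrt_le hf hf0 hfint n) (by positivity)

theorem stmt_3_general (d c₁ : ℝ) (hd : 0 < d) (hc₁ : 0 < c₁)
    (f : ℝ → ℝ)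
    (hfanti : StrictAntiOn f (Set.Ioc 0 1))
    (hfpos : ∀ ξ ∈ Set.Ioc (0 : ℝ) 1, 0 < f ξ)
    (hfint : IntegrableOn (fun ξ => f ξ / Real.sqrt ξ) (Set.Ioc 0 1) volume) :
    ∃ c₃ > 0, ∀ a : ℝ, 0 < a → a < 1 →
      ∀ ψ ψ' ψ'' : ℝ → ℝ,
        (∀ z ∈ Set.Icc (0 : ℝ) d, HasDerivWithinAt ψ (ψ' z) (Set.Icc 0 d) z) →
        (∀ z ∈ Set.Icc (0 : ℝ) d, HasDerivWithinAt ψ' (ψ'' z) (Set.Icc 0 d) z) →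
        (∀ z ∈ Set.Icc (0 : ℝ) d, |ψ z| < 1) →
        (∀ z ∈ Set.Icc (0 : ℝ) d, |ψ'' z| < c₁) →
        (∫ z in Set.Icc (0 : ℝ) d, (if a ≤ |ψ z| then |ψ' z| * f |ψ z| else 0)) < c₃ := by
  have hf0 : ∀ ξ ∈ Ioc (0 : ℝ) 1, 0 ≤ f ξ := fun ξ hξ => (hfpos ξ hξ).le
  have hI : 0 ≤ ∫ ξ in Ioc 0 1, f ξ / √ξ :=
    setIntegral_nonneg measurableSet_Ioc fun ξ hξ => div_nonneg (hf0 ξ hξ) (sqrt_nonneg ξ)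
  refine ⟨2 * (∫ ξ in Ioc 0 1, f ξ / √ξ) * (d + 10 * (2 * (2 * 1 / d + c₁ * d) + c₁ * d)) + 1,
    by positivity, fun a ha _ ψ ψ' ψ'' hψ hψ' hψ1 hψ''c => ?_⟩
  have hψ1' : ∀ z ∈ Icc 0 d, |ψ z| ≤ 1 := fun z hz => (hψ1 z hz).le
  have hψ''c' : ∀ z ∈ Icc 0 d, |ψ'' z| ≤ c₁ := fun z hz => (hψ''c z hz).le
  exact (setIntegral_ite_abs_deriv_mul_le hd.le ha hfanti.antitoneOn hf0 hfint hψ hψ' hψ1'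
    (abs_deriv_le_of_abs_le hd hψ hψ' hψ1' hψ''c') hψ''c').trans_lt (lt_add_one _)

/-- Lemma 2.1, second estimate: for `f : (0,1] → ℝ` continuous, strictly decreasing, positive,
with `f(ξ)√ξ` bounded and `∫₀¹ f(ξ)/√ξ dξ` convergent, there is `c₃ > 0` depending only on
`c₁`, `d` and `f` such that for every `0 < a < 1` and every twice differentiable
`ψ : [0,d] → ℝ` with `|ψ| < 1`, `|ψ''| < c₁`, one has
`∫₀^d |ψ'| · 𝟙{|ψ| ≥ a} · f(|ψ|) dz < c₃`. -/
theorem stmt_3 (d c₁ : ℝ) (hd : 0 < d) (hc₁ : 0 < c₁)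
    (f : ℝ → ℝ)
    (hfcont : ContinuousOn f (Set.Ioc 0 1))
    (hfanti : StrictAntiOn f (Set.Ioc 0 1))
    (hfpos : ∀ ξ ∈ Set.Ioc (0 : ℝ) 1, 0 < f ξ)
    (hfbdd : ∃ B : ℝ, ∀ ξ ∈ Set.Ioc (0 : ℝ) 1, f ξ * Real.sqrt ξ ≤ B)
    (hfint : IntegrableOn (fun ξ => f ξ / Real.sqrt ξ) (Set.Ioc 0 1) volume) :
    ∃ c₃ > 0, ∀ a : ℝ, 0 < a → a < 1 →
      ∀ ψ ψ' ψ'' : ℝ → ℝ,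
        (∀ z ∈ Set.Icc (0 : ℝ) d, HasDerivWithinAt ψ (ψ' z) (Set.Icc 0 d) z) →
        (∀ z ∈ Set.Icc (0 : ℝ) d, HasDerivWithinAt ψ' (ψ'' z) (Set.Icc 0 d) z) →
        (∀ z ∈ Set.Icc (0 : ℝ) d, |ψ z| < 1) →
        (∀ z ∈ Set.Icc (0 : ℝ) d, |ψ'' z| < c₁) →
        (∫ z in Set.Icc (0 : ℝ) d, (if a ≤ |ψ z| then |ψ' z| * f |ψ z| else 0)) < c₃ :=
  stmt_3_general d c₁ hd hc₁ f hfanti hfpos hfint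
end

section
/- Let d > 0, c₁ > 0, and let ψ : [0,d] → ℝ be twice differentiable with |ψ(z)| < 1 and |ψ''(z)| < c₁ for all z ∈ [0,d]. Then for every a > 0 and every l > 0 one has ∫₀^d |ψ'(z)| · 𝟙{|ψ(z)| < a} dz ≤ d·l + 4c₁·d·a/l + 2a. -/
open MeasureTheory Set

/-! With `u v = v / √(l² + v²)` and `H` a primitive of a trapezoidal cutoff `h` (equal to `1` on
`[-a, a]` and to `0` outside `[-c, c]`), the inequality `|v| ≤ l + u v * v` gives
`|ψ'| 𝟙{|ψ| < a} ≤ l h(ψ) + u(ψ') ψ' h(ψ)`. The last term is the derivative of `u(ψ') H(ψ)`,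
which is bounded by `c`, minus `u'(ψ') ψ'' H(ψ)`, which is bounded by `c₁ c / l`. Integrating
over `[0, d]` gives `l d + c (2 + c₁ d / l)`, and `c > a` is then tuned to the stated bound. -/

noncomputable def trapezoid (a c t : ℝ) : ℝ := max 0 (min 1 ((c - |t|) / (c - a)))

noncomputable def trapezoidPrimitive (a c t : ℝ) : ℝ := ∫ s in (0 : ℝ)..t, trapezoid a c s

theorem trapezoid_nonneg (a c t : ℝ) : 0 ≤ trapezoid a c t := le_max_left _ _

theorem trapezoid_le_one (a c t : ℝ) : trapezoid a c t ≤ 1 :=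
  max_le zero_le_one (min_le_left _ _)

theorem continuous_trapezoid (a c : ℝ) : Continuous (trapezoid a c) := by
  unfold trapezoid
  fun_prop

theorem trapezoid_eq_one {a c t : ℝ} (hac : a < c) (ht : |t| ≤ a) : trapezoid a c t = 1 := by
  have : 1 ≤ (c - |t|) / (c - a) := by rw [le_div_iff₀ (sub_pos.2 hac)]; linarith
  simp [trapezoid, min_eq_left this]

theorem trapezoid_eq_zero {a c t : ℝ} (hac : a < c) (ht : c ≤ |t|) : trapezoid a c t = 0 :=
  max_eq_left <| min_le_of_right_le <| div_nonpos_of_nonpos_of_nonneg (by linarith) (by linarith)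

theorem hasDerivAt_trapezoidPrimitive (a c t : ℝ) :
    HasDerivAt (trapezoidPrimitive a c) (trapezoid a c t) t :=
  ((continuous_trapezoid a c).integral_hasStrictDerivAt 0 t).hasDerivAt

theorem abs_trapezoidPrimitive_le {a c : ℝ} (hac : a < c) (hc : 0 ≤ c) (t : ℝ) :
    |trapezoidPrimitive a c t| ≤ c := by
  -- `trapezoid a c` vanishes between `t` and its projection `s` onto `[-c, c]`.
  set s := max (-c) (min c t)
  have hint : ∀ x y : ℝ, IntervalIntegrable (trapezoid a c) volume x y :=
    fun x y => (continuous_trapezoid a c).intervalIntegrable x y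
  have htail : ∫ x in s..t, trapezoid a c x = 0 := by
    refine intervalIntegral.integral_zero_ae (ae_of_all _ fun x hx => trapezoid_eq_zero hac ?_)
    grind [mem_uIoc]
  have hs : |trapezoidPrimitive a c s| ≤ |s - 0| := by
    simpa [trapezoidPrimitive] using intervalIntegral.norm_integral_le_of_norm_le_const
      (a := 0) (b := s) (f := trapezoid a c) (C := 1)
      (fun x _ => by simpa [abs_of_nonneg (trapezoid_nonneg a c x)] using trapezoid_le_one a c x)
  have hsplit : trapezoidPrimitive a c s + ∫ x in s..t, trapezoid a c x = trapezoidPrimitive a c t :=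
    intervalIntegral.integral_add_adjacent_intervals (hint 0 s) (hint s t)
  rw [← hsplit, htail, add_zero]
  exact hs.trans <| by
    rw [sub_zero, abs_le]
    exact ⟨le_max_left _ _, max_le (by linarith) (min_le_left _ _)⟩

noncomputable def softSign (l v : ℝ) : ℝ := v / √(l ^ 2 + v ^ 2)

theorem softSign_mul_self_nonneg (l v : ℝ) : 0 ≤ softSign l v * v := by
  rw [softSign, div_mul_eq_mul_div]
  exact div_nonneg (mul_self_nonneg v) (Real.sqrt_nonneg _)

theorem abs_softSign_le_one (l v : ℝ) : |softSign l v| ≤ 1 := by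
  rw [softSign, abs_div, abs_of_nonneg (Real.sqrt_nonneg _)]
  exact div_le_one_of_le₀ (Real.abs_le_sqrt (by nlinarith)) (Real.sqrt_nonneg _)

theorem abs_le_add_softSign_mul {l : ℝ} (hl : 0 < l) (v : ℝ) : |v| ≤ l + softSign l v * v := by
  have hq : 0 < √(l ^ 2 + v ^ 2) := Real.sqrt_pos.2 (by positivity)
  have hq_sq : √(l ^ 2 + v ^ 2) ^ 2 = l ^ 2 + v ^ 2 := Real.sq_sqrt (by positivity)
  have hq_le : √(l ^ 2 + v ^ 2) ≤ l + |v| := by nlinarith [abs_nonneg v, sq_abs v]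
  have : (|v| - l) * √(l ^ 2 + v ^ 2) ≤ v * v := by
    rcases le_total (|v|) l with h | h
    · nlinarith [mul_self_nonneg v]
    · nlinarith [sq_abs v]
  rw [softSign, div_mul_eq_mul_div, ← sub_le_iff_le_add', le_div_iff₀ hq]
  exact this

theorem hasDerivAt_softSign {l : ℝ} (hl : 0 < l) (v : ℝ) :
    HasDerivAt (softSign l) (l ^ 2 / √(l ^ 2 + v ^ 2) ^ 3) v := by
  have hpos : 0 < l ^ 2 + v ^ 2 := by positivity
  have hq : √(l ^ 2 + v ^ 2) ≠ 0 := (Real.sqrt_pos.2 hpos).ne'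
  have hsqrt : HasDerivAt (fun w => √(l ^ 2 + w ^ 2)) (v / √(l ^ 2 + v ^ 2)) v := by
    convert ((hasDerivAt_pow 2 v).const_add (l ^ 2)).sqrt hpos.ne' using 1
    field_simp
    ring
  refine ((hasDerivAt_id' v).fun_div hsqrt hq).congr_deriv ?_
  field_simp
  rw [Real.sq_sqrt hpos.le]
  ring

theorem abs_deriv_softSign_le {l : ℝ} (hl : 0 < l) (v : ℝ) : |deriv (softSign l) v| ≤ l⁻¹ := by
  have hq : l ≤ √(l ^ 2 + v ^ 2) := Real.le_sqrt_of_sq_le (by nlinarith)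
  rw [(hasDerivAt_softSign hl v).deriv, abs_of_nonneg (by positivity),
    div_le_iff₀ (by positivity)]
  calc l ^ 2 = l⁻¹ * l ^ 3 := by field_simp
    _ ≤ l⁻¹ * √(l ^ 2 + v ^ 2) ^ 3 := by gcongr

theorem ite_abs_lt_le_trapezoid {a c l : ℝ} (hac : a < c) (hl : 0 < l) (t v : ℝ) :
    (if |t| < a then |v| else 0) ≤ l * trapezoid a c t + softSign l v * v * trapezoid a c t := by
  split_ifs with ht
  · simpa [trapezoid_eq_one hac ht.le] using abs_le_add_softSign_mul hl v
  · have := trapezoid_nonneg a c t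
    have := softSign_mul_self_nonneg l v
    positivity

theorem setIntegral_Icc_le_of_hasDerivAt_add {F g r : ℝ → ℝ} {a b B K : ℝ} (hab : a ≤ b)
    (hF : ContinuousOn F (Icc a b)) (hFB : ∀ x ∈ Icc a b, |F x| ≤ B)
    (hderiv : ∀ x ∈ Ioo a b, HasDerivAt F (g x + r x) x)
    (hg : IntegrableOn g (Icc a b)) (hr : ∀ x ∈ Icc a b, |r x| ≤ K) :
    ∫ x in Icc a b, g x ≤ 2 * B + K * (b - a) := by
  have hr_meas : AEStronglyMeasurable r (volume.restrict (Icc a b)) := by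
    refine ((stronglyMeasurable_deriv F).aestronglyMeasurable.sub hg.aestronglyMeasurable).congr ?_
    rw [← Measure.restrict_congr_set Ioo_ae_eq_Icc]
    filter_upwards [ae_restrict_mem measurableSet_Ioo] with x hx
    simp [(hderiv x hx).deriv]
  have hr_int : IntegrableOn r (Icc a b) :=
    .of_bound measure_Icc_lt_top hr_meas K ((ae_restrict_iff' measurableSet_Icc).2 (ae_of_all _ hr))
  have hftc : (∫ x in Icc a b, g x) + ∫ x in Icc a b, r x = F b - F a := by
    rw [← integral_add hg hr_int, integral_Icc_eq_integral_Ioc,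
      ← intervalIntegral.integral_of_le hab]
    exact intervalIntegral.integral_eq_sub_of_hasDeriv_right_of_le hab hF
      (fun x hx => (hderiv x hx).hasDerivWithinAt)
      ((intervalIntegrable_iff_integrableOn_Icc_of_le hab).2 (hg.add hr_int))
  have hr_le : |∫ x in Icc a b, r x| ≤ K * (b - a) := by
    simpa [Real.volume_real_Icc_of_le hab] using
      norm_setIntegral_le_of_norm_le_const (f := r) (μ := volume) measure_Icc_lt_top hr
  have hFa := abs_le.1 (hFB a ⟨le_rfl, hab⟩)
  have hFb := abs_le.1 (hFB b ⟨hab, le_rfl⟩)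
  linarith [(abs_le.1 hr_le).1]

theorem setIntegral_ite_abs_lt_le {d c₁ a c l : ℝ} (hd : 0 ≤ d) (hac : a < c) (hc : 0 ≤ c)
    (hl : 0 < l) {ψ ψ' ψ'' : ℝ → ℝ}
    (hψ' : ∀ z ∈ Icc 0 d, HasDerivWithinAt ψ (ψ' z) (Icc 0 d) z)
    (hψ'' : ∀ z ∈ Icc 0 d, HasDerivWithinAt ψ' (ψ'' z) (Icc 0 d) z)
    (hψ''_le : ∀ z ∈ Icc 0 d, |ψ'' z| ≤ c₁) :
    ∫ z in Icc 0 d, (if |ψ z| < a then |ψ' z| else 0) ≤ l * d + c * (2 + c₁ * d / l) := by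
  have hψ_cont : ContinuousOn ψ (Icc 0 d) := fun z hz => (hψ' z hz).continuousWithinAt
  have hψ'_cont : ContinuousOn ψ' (Icc 0 d) := fun z hz => (hψ'' z hz).continuousWithinAt
  have hu_cont : Continuous (softSign l) :=
    continuous_iff_continuousAt.2 fun v => (hasDerivAt_softSign hl v).continuousAt
  have hH_cont : Continuous (trapezoidPrimitive a c) :=
    continuous_iff_continuousAt.2 fun t => (hasDerivAt_trapezoidPrimitive a c t).continuousAt
  have hh_cont := continuous_trapezoid a c
  have hlh : IntegrableOn (fun z => l * trapezoid a c (ψ z)) (Icc 0 d) :=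
    (continuousOn_const.mul (hh_cont.comp_continuousOn hψ_cont)).integrableOn_Icc
  have hG : IntegrableOn (fun z => softSign l (ψ' z) * ψ' z * trapezoid a c (ψ z)) (Icc 0 d) :=
    (((hu_cont.comp_continuousOn hψ'_cont).mul hψ'_cont).mul
      (hh_cont.comp_continuousOn hψ_cont)).integrableOn_Icc
  have hderiv : ∀ z ∈ Ioo 0 d,
      HasDerivAt (fun z => softSign l (ψ' z) * trapezoidPrimitive a c (ψ z))
        (softSign l (ψ' z) * ψ' z * trapezoid a c (ψ z) +
          deriv (softSign l) (ψ' z) * ψ'' z * trapezoidPrimitive a c (ψ z)) z := by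
    intro z hz
    have hψ'_at := (hψ'' z (Ioo_subset_Icc_self hz)).hasDerivAt (Icc_mem_nhds hz.1 hz.2)
    have hψ_at := (hψ' z (Ioo_subset_Icc_self hz)).hasDerivAt (Icc_mem_nhds hz.1 hz.2)
    refine (((hasDerivAt_softSign hl _).comp z hψ'_at).mul
      ((hasDerivAt_trapezoidPrimitive a c _).comp z hψ_at)).congr_deriv ?_
    rw [(hasDerivAt_softSign hl _).deriv]
    simp only [Function.comp_apply]
    ring
  have hG_le : ∫ z in Icc 0 d, softSign l (ψ' z) * ψ' z * trapezoid a c (ψ z) ≤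
      2 * c + l⁻¹ * (c₁ * c) * (d - 0) := by
    refine setIntegral_Icc_le_of_hasDerivAt_add hd ?_ ?_ hderiv hG ?_
    · exact (hu_cont.comp_continuousOn hψ'_cont).mul (hH_cont.comp_continuousOn hψ_cont)
    · intro z _
      rw [abs_mul]
      exact (mul_le_mul (abs_softSign_le_one l _) (abs_trapezoidPrimitive_le hac hc _)
        (abs_nonneg _) zero_le_one).trans_eq (one_mul c)
    · intro z hz
      rw [abs_mul, abs_mul, mul_assoc]
      exact mul_le_mul (abs_deriv_softSign_le hl _)
        (mul_le_mul (hψ''_le z hz) (abs_trapezoidPrimitive_le hac hc _) (abs_nonneg _)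
          ((abs_nonneg _).trans (hψ''_le z hz))) (by positivity) (by positivity)
  have hlh_le : ∫ z in Icc 0 d, l * trapezoid a c (ψ z) ≤ l * d :=
    calc _ ≤ ∫ z in Icc 0 d, l :=
          setIntegral_mono_on hlh (integrableOn_const measure_Icc_lt_top.ne) measurableSet_Icc
            fun z _ => mul_le_of_le_one_right hl.le (trapezoid_le_one a c _)
      _ = l * d := by simp [Real.volume_real_Icc_of_le hd, mul_comm]
  calc ∫ z in Icc 0 d, (if |ψ z| < a then |ψ' z| else 0)
      ≤ ∫ z in Icc 0 d, (l * trapezoid a c (ψ z) +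
          softSign l (ψ' z) * ψ' z * trapezoid a c (ψ z)) :=
        integral_mono_of_nonneg (ae_of_all _ fun z => by positivity) (hlh.add hG)
          (ae_of_all _ fun z => ite_abs_lt_le_trapezoid hac hl _ _)
    _ = (∫ z in Icc 0 d, l * trapezoid a c (ψ z)) +
          ∫ z in Icc 0 d, softSign l (ψ' z) * ψ' z * trapezoid a c (ψ z) := integral_add hlh hG
    _ ≤ l * d + c * (2 + c₁ * d / l) := by
      have : 2 * c + l⁻¹ * (c₁ * c) * (d - 0) = c * (2 + c₁ * d / l) := by ring
      linarith

theorem stmt_6_general (d c₁ : ℝ) (hd : 0 < d) (hc₁ : 0 < c₁)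
    (ψ ψ' ψ'' : ℝ → ℝ)
    (hψ' : ∀ z ∈ Set.Icc (0 : ℝ) d, HasDerivWithinAt ψ (ψ' z) (Set.Icc 0 d) z)
    (hψ'' : ∀ z ∈ Set.Icc (0 : ℝ) d, HasDerivWithinAt ψ' (ψ'' z) (Set.Icc 0 d) z)
    (hψ''lt : ∀ z ∈ Set.Icc (0 : ℝ) d, |ψ'' z| < c₁)
    (a l : ℝ) (ha : 0 < a) (hl : 0 < l) :
    (∫ z in Set.Icc (0 : ℝ) d, (if |ψ z| < a then |ψ' z| else 0)) ≤
      d * l + 4 * c₁ * d * a / l + 2 * a := by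
  have hk : 0 < c₁ * d / l := by positivity
  have hac : a < a * (2 + 4 * (c₁ * d / l)) / (2 + c₁ * d / l) := by
    rw [lt_div_iff₀ (by positivity)]
    nlinarith
  calc _ ≤ l * d + a * (2 + 4 * (c₁ * d / l)) / (2 + c₁ * d / l) * (2 + c₁ * d / l) :=
        setIntegral_ite_abs_lt_le hd.le hac (ha.trans hac).le hl hψ' hψ''
          fun z hz => (hψ''lt z hz).le
    _ = d * l + 4 * c₁ * d * a / l + 2 * a := by
      field_simp
      ring

/-- Intermediate estimate obtained by splitting `[0,d]` into `M_h` and `Λ_h`: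
for every `a > 0` and `l > 0`, `∫₀^d |ψ'| · 𝟙{|ψ| < a} dz ≤ dl + 4c₁da/l + 2a`. -/
theorem stmt_6 (d c₁ : ℝ) (hd : 0 < d) (hc₁ : 0 < c₁)
    (ψ ψ' ψ'' : ℝ → ℝ)
    (hψ' : ∀ z ∈ Set.Icc (0 : ℝ) d, HasDerivWithinAt ψ (ψ' z) (Set.Icc 0 d) z)
    (hψ'' : ∀ z ∈ Set.Icc (0 : ℝ) d, HasDerivWithinAt ψ' (ψ'' z) (Set.Icc 0 d) z)
    (hψlt : ∀ z ∈ Set.Icc (0 : ℝ) d, |ψ z| < 1)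
    (hψ''lt : ∀ z ∈ Set.Icc (0 : ℝ) d, |ψ'' z| < c₁)
    (a l : ℝ) (ha : 0 < a) (hl : 0 < l) :
    (∫ z in Set.Icc (0 : ℝ) d, (if |ψ z| < a then |ψ' z| else 0)) ≤
      d * l + 4 * c₁ * d * a / l + 2 * a :=
  stmt_6_general d c₁ hd hc₁ ψ ψ' ψ'' hψ' hψ'' hψ''lt a l ha hl
end
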